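/- arXiv:2112.08742 — 3 statements merged into one kernel-verified Lean document; each statement's English description precedes it below -/
import Mathlib

section
/- Let α₁, α₂, α₃, β₁, β₂, β₃ be real numbers with α₁ > 0, α₃ > 0, α₁α₃ − α₂² = 0, and suppose the scenario-A1 sign conditions hold: β₁ ≤ 0, β₃ ≤ 0 and β₁β₃ − β₂² ≤ 0. Assume ρ := α₁β₃ + α₃β₁ − 2α₂β₂ > 0. Then for every real k with k > max{−β₁/α₁, −β₃/α₃, (β₂² − β₁β₃)/ρ}, the 2×2 real symmetric matrix k·!![α₁, α₂; α₂, α₃] + !![β₁, β₂; β₂, β₃] is positive definite. -/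
/-!
A symmetric `2 × 2` matrix is positive definite as soon as its `(0,0)` entry and its determinant
are positive (complete the square). For `M = k • A + B` the `(0,0)` entry `k α₁ + β₁` is positive
since `k > -β₁/α₁`, and since `det A = 0` the determinant
`det M = k² det A + k ρ + det B = k ρ + (β₁ β₃ - β₂²)` is positive since `k > (β₂² - β₁ β₃)/ρ`.
-/

namespace Matrix

variable {R : Type*}

theorem smul_add_fin_two_of [Semiring R] (k a₁₁ a₁₂ a₂₁ a₂₂ b₁₁ b₁₂ b₂₁ b₂₂ : R) :
    k • !![a₁₁, a₁₂; a₂₁, a₂₂] + !![b₁₁, b₁₂; b₂₁, b₂₂] =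
      !![k * a₁₁ + b₁₁, k * a₁₂ + b₁₂; k * a₂₁ + b₂₁, k * a₂₂ + b₂₂] := by
  ext i j
  fin_cases i <;> fin_cases j <;> rfl

theorem star_dotProduct_mulVec_fin_two_of [CommRing R] [StarRing R] [TrivialStar R]
    (a b c : R) (x : Fin 2 → R) :
    star x ⬝ᵥ (!![a, b; b, c] *ᵥ x) = a * x 0 ^ 2 + 2 * b * x 0 * x 1 + c * x 1 ^ 2 := by
  simp only [star_trivial, dotProduct, mulVec, Fin.sum_univ_two, of_apply, cons_val',
    cons_val_zero, cons_val_one, empty_val', cons_val_fin_one]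
  ring

theorem posDef_fin_two_of [Field R] [LinearOrder R] [IsStrictOrderedRing R] [StarRing R]
    [TrivialStar R] {a b c : R} (ha : 0 < a) (hdet : 0 < a * c - b ^ 2) :
    !![a, b; b, c].PosDef := by
  refine PosDef.of_dotProduct_mulVec_pos ?_ fun x hx ↦ ?_
  · exact isHermitian_iff_isSymm.mpr <| IsSymm.ext fun i j ↦ by fin_cases i <;> fin_cases j <;> rfl
  rw [star_dotProduct_mulVec_fin_two_of]
  have hsquare : 0 < (a * x 0 + b * x 1) ^ 2 + (a * c - b ^ 2) * x 1 ^ 2 := by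
    rcases eq_or_ne (x 1) 0 with h1 | h1
    · have h0 : x 0 ≠ 0 := fun h0 ↦ hx (funext fun i ↦ by fin_cases i <;> simpa)
      simp only [h1, mul_zero, add_zero, ne_eq, OfNat.ofNat_ne_zero, not_false_eq_true,
        zero_pow]
      positivity
    · linarith [sq_nonneg (a * x 0 + b * x 1), mul_pos hdet (sq_pos_of_ne_zero h1)]
  exact pos_of_mul_pos_right (by linear_combination hsquare) ha.le

end Matrix

theorem stmt_0_general (α₁ α₂ α₃ β₁ β₂ β₃ : ℝ)
    (hα₁ : 0 < α₁) (hαdet : α₁ * α₃ - α₂ ^ 2 = 0)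
    (hρ : 0 < α₁ * β₃ + α₃ * β₁ - 2 * α₂ * β₂) :
    ∀ k : ℝ,
      max (max (-β₁ / α₁) (-β₃ / α₃))
          ((β₂ ^ 2 - β₁ * β₃) / (α₁ * β₃ + α₃ * β₁ - 2 * α₂ * β₂)) < k →
      (k • !![α₁, α₂; α₂, α₃] + !![β₁, β₂; β₂, β₃]).PosDef := by
  intro k hk
  obtain ⟨⟨hk₁, -⟩, hkρ⟩ := by simpa only [max_lt_iff] using hk
  rw [div_lt_iff₀ hα₁] at hk₁
  rw [div_lt_iff₀ hρ] at hkρ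
  rw [Matrix.smul_add_fin_two_of]
  exact Matrix.posDef_fin_two_of (by linarith) (by linear_combination hkρ - k ^ 2 * hαdet)

theorem stmt_0 (α₁ α₂ α₃ β₁ β₂ β₃ : ℝ)
    (hα₁ : 0 < α₁) (hα₃ : 0 < α₃) (hαdet : α₁ * α₃ - α₂ ^ 2 = 0)
    (hβ₁ : β₁ ≤ 0) (hβ₃ : β₃ ≤ 0) (hβdet : β₁ * β₃ - β₂ ^ 2 ≤ 0)
    (hρ : 0 < α₁ * β₃ + α₃ * β₁ - 2 * α₂ * β₂) :
    ∀ k : ℝ,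
      max (max (-β₁ / α₁) (-β₃ / α₃))
          ((β₂ ^ 2 - β₁ * β₃) / (α₁ * β₃ + α₃ * β₁ - 2 * α₂ * β₂)) < k →
      (k • !![α₁, α₂; α₂, α₃] + !![β₁, β₂; β₂, β₃]).PosDef :=
  stmt_0_general α₁ α₂ α₃ β₁ β₂ β₃ hα₁ hαdet hρ
end

section
/- Let α₁, α₂, α₃, β₁, β₂, β₃ be real numbers with α₁ > 0, α₃ > 0, α₁α₃ − α₂² = 0, and suppose the scenario-A2 sign conditions hold: β₁ ≥ 0, β₃ ≥ 0 and β₁β₃ − β₂² ≤ 0. Assume ρ := α₁β₃ + α₃β₁ − 2α₂β₂ > 0. Then for every real k with k > (β₂² − β₁β₃)/ρ, the 2×2 real symmetric matrix k·!![α₁, α₂; α₂, α₃] + !![β₁, β₂; β₂, β₃] is positive definite. -/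
/-!
Since `det B ≤ 0 < ρ`, the threshold is nonnegative, so `k > 0` and the top-left entry
`k α₁ + β₁` is positive. As `det A = 0`, `det (k A + B) = k ρ + det B > 0`, and a symmetric
`2 × 2` matrix with positive top-left entry and positive determinant is positive definite.
-/

open Matrix

lemma Matrix.posDef_fin_two_of_pos_of_det_pos {a b c : ℝ} (ha : 0 < a)
    (hdet : 0 < a * c - b ^ 2) : !![a, b; b, c].PosDef := by
  refine .of_dotProduct_mulVec_pos ?_ fun x hx ↦ ?_
  · ext i j; fin_cases i <;> fin_cases j <;> rfl
  have hx' : x 0 ≠ 0 ∨ x 1 ≠ 0 := by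
    by_contra! h
    exact hx (funext fun i ↦ by fin_cases i <;> simp [h.1, h.2])
  -- completing the square: `a · xᵀMx = (a x₀ + b x₁)² + (ac − b²) x₁²`
  have hsq : 0 < (a * x 0 + b * x 1) ^ 2 + (a * c - b ^ 2) * x 1 ^ 2 := by
    rcases hx' with h0 | h1
    · rcases eq_or_ne (x 1) 0 with h1 | h1
      · simpa [h1] using sq_pos_of_ne_zero (mul_ne_zero ha.ne' h0)
      · positivity
    · positivity
  simp only [vec2_dotProduct, mulVec_fin_two, of_apply, cons_val', cons_val_zero, cons_val_one,
    empty_val', cons_val_fin_one, star_trivial]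
  nlinarith

lemma Matrix.smul_add_fin_two {R : Type*} [Semiring R] (k a₁ a₂ a₃ a₄ b₁ b₂ b₃ b₄ : R) :
    k • !![a₁, a₂; a₃, a₄] + !![b₁, b₂; b₃, b₄] =
      !![k * a₁ + b₁, k * a₂ + b₂; k * a₃ + b₃, k * a₄ + b₄] := by
  ext i j; fin_cases i <;> fin_cases j <;> rfl

theorem stmt_1_general (α₁ α₂ α₃ β₁ β₂ β₃ : ℝ)
    (hα₁ : 0 < α₁) (hαdet : α₁ * α₃ - α₂ ^ 2 = 0)
    (hβ₁ : 0 ≤ β₁) (hβdet : β₁ * β₃ - β₂ ^ 2 ≤ 0)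
    (hρ : 0 < α₁ * β₃ + α₃ * β₁ - 2 * α₂ * β₂) :
    ∀ k : ℝ,
      (β₂ ^ 2 - β₁ * β₃) / (α₁ * β₃ + α₃ * β₁ - 2 * α₂ * β₂) < k →
      (k • !![α₁, α₂; α₂, α₃] + !![β₁, β₂; β₂, β₃]).PosDef := by
  intro k hk
  rw [div_lt_iff₀ hρ] at hk
  have hk₀ : 0 < k := pos_of_mul_pos_left (by linarith) hρ.le
  have hdet : (k * α₁ + β₁) * (k * α₃ + β₃) - (k * α₂ + β₂) ^ 2 =
      k ^ 2 * (α₁ * α₃ - α₂ ^ 2) + k * (α₁ * β₃ + α₃ * β₁ - 2 * α₂ * β₂) +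
        (β₁ * β₃ - β₂ ^ 2) := by ring
  rw [smul_add_fin_two]
  refine posDef_fin_two_of_pos_of_det_pos (by positivity) ?_
  rw [hdet, hαdet]
  linarith

theorem stmt_1 (α₁ α₂ α₃ β₁ β₂ β₃ : ℝ)
    (hα₁ : 0 < α₁) (hα₃ : 0 < α₃) (hαdet : α₁ * α₃ - α₂ ^ 2 = 0)
    (hβ₁ : 0 ≤ β₁) (hβ₃ : 0 ≤ β₃) (hβdet : β₁ * β₃ - β₂ ^ 2 ≤ 0)
    (hρ : 0 < α₁ * β₃ + α₃ * β₁ - 2 * α₂ * β₂) :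
    ∀ k : ℝ,
      (β₂ ^ 2 - β₁ * β₃) / (α₁ * β₃ + α₃ * β₁ - 2 * α₂ * β₂) < k →
      (k • !![α₁, α₂; α₂, α₃] + !![β₁, β₂; β₂, β₃]).PosDef :=
  stmt_1_general α₁ α₂ α₃ β₁ β₂ β₃ hα₁ hαdet hβ₁ hβdet hρ
end

section
/- Fix real numbers x_d, y_d, z_d, m, g, k₁, k₂ with m > 0, g > 0, y_d < 0, k₁ > 0, k₂ > 0. Define V_dh : ℝ³ → ℝ by V_dh(x, y, z) = (k₁/2)(x − x_d)² + (k₂/2)(y² + z² − y_d²)². Then (i) the Hessian matrix of V_dh at the point (x_d, y_d, 0) equals the diagonal matrix diag(k₁, 4k₂y_d², 0); and (ii) the 3×3 matrix diag(k₁, 4k₂y_d², 0) + diag(0, 0, −m·g·y_d/(y_d² + z_d²)) is positive definite. -/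
/-!
Write `V_dh = (k₁/2) u² + (k₂/2) w²` with `u q = x - x_d` and `w q = y² + z² - y_d²`. Both `u` and
`w` vanish at `q_d`, and the Hessian of `h²` at a zero of `h` is `2 dh ⊗ dh` (the term `2 h · d²h`
drops out). Hence the Hessian at `q_d` is `k₁ du ⊗ du + k₂ dw ⊗ dw` with `du = dx` and
`dw = 2 y_d dy`. The matrix of part (ii) is diagonal, and its last entry `-m g y_d / (y_d² + z_d²)`
is positive because `y_d < 0`.
-/

section SecondDerivative

variable {𝕜 E : Type*} [NontriviallyNormedField 𝕜] [NormedAddCommGroup E] [NormedSpace 𝕜 E]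
  {x : E}

theorem iteratedFDeriv_two_sq_apply_of_eq_zero {h : E → 𝕜} (hh : ContDiff 𝕜 2 h)
    (hx : h x = 0) (v w : E) :
    iteratedFDeriv 𝕜 2 (fun y => h y ^ 2) x ![v, w] =
      2 * (fderiv 𝕜 h x v * fderiv 𝕜 h x w) := by
  have hd : Differentiable 𝕜 h := hh.differentiable two_ne_zero
  have hdd : Differentiable 𝕜 (fderiv 𝕜 h) :=
    (hh.fderiv_right (m := 1) le_rfl).differentiable one_ne_zero
  have hsq : fderiv 𝕜 (fun y => h y ^ 2) = fun y => (2 * h y) • fderiv 𝕜 h y := by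
    ext y v
    rw [((hd y).hasFDerivAt.pow 2).fderiv]
    simp
  have hsq_deriv : HasFDerivAt (fun y => (2 * h y) • fderiv 𝕜 h y)
      ((2 * h x) • fderiv 𝕜 (fderiv 𝕜 h) x +
        ((2 : 𝕜) • fderiv 𝕜 h x).smulRight (fderiv 𝕜 h x)) x :=
    ((hd x).hasFDerivAt.const_mul 2).smul (hdd x).hasFDerivAt
  rw [iteratedFDeriv_two_apply, hsq, hsq_deriv.fderiv]
  simp [hx]
  ring

theorem iteratedFDeriv_two_mul_sq_add_mul_sq_apply {u w : E → 𝕜} (hu : ContDiff 𝕜 2 u)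
    (hw : ContDiff 𝕜 2 w) (hux : u x = 0) (hwx : w x = 0) (a b : 𝕜) (v v' : E) :
    iteratedFDeriv 𝕜 2 (fun y => a * u y ^ 2 + b * w y ^ 2) x ![v, v'] =
      a * (2 * (fderiv 𝕜 u x v * fderiv 𝕜 u x v')) +
        b * (2 * (fderiv 𝕜 w x v * fderiv 𝕜 w x v')) := by
  have hu2 : ContDiff 𝕜 2 fun y => u y ^ 2 := hu.pow 2
  have hw2 : ContDiff 𝕜 2 fun y => w y ^ 2 := hw.pow 2
  have hsmul : (fun y => a * u y ^ 2 + b * w y ^ 2) = fun y => a • u y ^ 2 + b • w y ^ 2 := by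
    simp only [smul_eq_mul]
  rw [hsmul, fun_iteratedFDeriv_add_apply (hu2.const_smul a).contDiffAt
    (hw2.const_smul b).contDiffAt, iteratedFDeriv_const_smul_apply' hu2.contDiffAt,
    iteratedFDeriv_const_smul_apply' hw2.contDiffAt]
  simp [iteratedFDeriv_two_sq_apply_of_eq_zero hu hux, iteratedFDeriv_two_sq_apply_of_eq_zero hw hwx]

end SecondDerivative

theorem stmt_9 (xd yd zd m g k₁ k₂ : ℝ)
    (hm : 0 < m) (hg : 0 < g) (hyd : yd < 0) (hk₁ : 0 < k₁) (hk₂ : 0 < k₂)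
    (Vdh : (Fin 3 → ℝ) → ℝ)
    (hVdh : Vdh = fun q =>
      k₁ / 2 * (q 0 - xd) ^ 2 + k₂ / 2 * ((q 1) ^ 2 + (q 2) ^ 2 - yd ^ 2) ^ 2)
    (qd : Fin 3 → ℝ) (hqd : qd = ![xd, yd, 0]) :
    (∀ i j : Fin 3,
      iteratedFDeriv ℝ 2 Vdh qd ![Pi.single i 1, Pi.single j 1] =
        Matrix.diagonal ![k₁, 4 * k₂ * yd ^ 2, 0] i j) ∧
    (Matrix.diagonal ![k₁, 4 * k₂ * yd ^ 2, 0] +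
      Matrix.diagonal ![0, 0, -(m * g * yd) / (yd ^ 2 + zd ^ 2)]).PosDef := by
  subst hVdh hqd
  constructor
  · have hu (v : Fin 3 → ℝ) : fderiv ℝ (fun q : Fin 3 → ℝ => q 0 - xd) ![xd, yd, 0] v = v 0 := by
      rw [((hasFDerivAt_apply 0 _).sub_const xd).fderiv]
      rfl
    have hw (v : Fin 3 → ℝ) :
        fderiv ℝ (fun q : Fin 3 → ℝ => q 1 ^ 2 + q 2 ^ 2 - yd ^ 2) ![xd, yd, 0] v = 2 * yd * v 1 := by
      rw [((((hasFDerivAt_apply 1 _).pow 2).fun_add ((hasFDerivAt_apply 2 _).pow 2)).sub_const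
        (yd ^ 2)).fderiv]
      simp
    intro i j
    rw [iteratedFDeriv_two_mul_sq_add_mul_sq_apply (by fun_prop) (by fun_prop) (by simp) (by simp),
      hu, hu, hw, hw]
    fin_cases i <;> fin_cases j <;> simp [Matrix.diagonal]; ring
  · have hyd2 : 0 < yd ^ 2 := sq_pos_of_neg hyd
    have hgrav : 0 < -(m * g * yd) / (yd ^ 2 + zd ^ 2) :=
      div_pos (neg_pos.2 (mul_neg_of_pos_of_neg (mul_pos hm hg) hyd))
        (add_pos_of_pos_of_nonneg hyd2 (sq_nonneg zd))
    rw [Matrix.diagonal_add, Matrix.posDef_diagonal_iff]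
    intro i
    fin_cases i <;> simp [hk₁, hk₂, hyd2, hgrav]
end
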